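/- arXiv:2111.06527 — 6 statements merged into one kernel-verified Lean document; each statement's English description precedes it below -/
import Mathlib

section
/- Let X, Y, Z be three independent random variables, A an event determined by (X,Y), and A' an event determined by (Y,Z). Let X₁, Y₁, Y₂, Z₁ be independent samples of X, Y, Y, Z respectively. Then the probability that [A holds on (X₁,Y₁) and A' holds on (Y₂,Z₁)] and [A fails on (X₁,Y₂) or A' fails on (Y₁,Z₁)] is at most P(A)·P(A') − P(A ∩ A')². -/
/-!
Let `G x z = ν {y | (x, y) ∈ A ∧ (y, z) ∈ A'}` and `S = {(x, y, z) | (x, y) ∈ A ∧ (y, z) ∈ A'}`.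
The event in question is `E \ C`, where `E = {A (X₁, Y₁) ∧ A' (Y₂, Z₁)}` has probability
`P(A) P(A')` and `C ⊆ E` is the event that both `(X₁, Y₁, Z₁)` and `(X₁, Y₂, Z₁)` lie in `S`.
Conditionally on `(X₁, Z₁)` the two middle samples are independent, so `P(C) = E[G²]`, while
`P(S) = E[G]`; the bound is then `E[G]² ≤ E[G²]`.
-/

open MeasureTheory
open scoped ENNReal

lemma sq_lintegral_le_lintegral_sq {δ : Type*} [MeasurableSpace δ] (m : Measure δ)
    [IsProbabilityMeasure m] {g : δ → ℝ≥0∞} (hg : AEMeasurable g m) :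
    (∫⁻ a, g a ∂m) ^ 2 ≤ ∫⁻ a, g a ^ 2 ∂m := by
  have h := ENNReal.lintegral_mul_le_Lp_mul_Lq m Real.HolderConjugate.two_two hg
    (aemeasurable_const (b := (1 : ℝ≥0∞)))
  simp only [Pi.mul_apply, mul_one, lintegral_const, measure_univ, ENNReal.rpow_two] at h
  calc (∫⁻ a, g a ∂m) ^ 2 ≤ ((∫⁻ a, g a ^ 2 ∂m) ^ (2⁻¹ : ℝ)) ^ (2 : ℝ) := by
        rw [ENNReal.rpow_two]; gcongr; simpa using h
    _ = ∫⁻ a, g a ^ 2 ∂m := by rw [← ENNReal.rpow_mul]; norm_num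

def fiberSquare {δ β : Type*} (T : Set (δ × β)) : Set (δ × β × β) :=
  {p | (p.1, p.2.1) ∈ T ∧ (p.1, p.2.2) ∈ T}

lemma measurableSet_fiberSquare {δ β : Type*} [MeasurableSpace δ] [MeasurableSpace β]
    {T : Set (δ × β)} (hT : MeasurableSet T) : MeasurableSet (fiberSquare T) :=
  (hT.preimage (measurable_fst.prodMk measurable_snd.fst)).inter
    (hT.preimage (measurable_fst.prodMk measurable_snd.snd))

lemma sq_measure_prod_le_measure_fiberSquare {δ β : Type*} [MeasurableSpace δ]
    [MeasurableSpace β] (m : Measure δ) [IsProbabilityMeasure m] (ν : Measure β) [SFinite ν]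
    {T : Set (δ × β)} (hT : MeasurableSet T) :
    m.prod ν T ^ 2 ≤ m.prod (ν.prod ν) (fiberSquare T) := by
  have hslice (d : δ) :
      Prod.mk d ⁻¹' fiberSquare T = (Prod.mk d ⁻¹' T) ×ˢ (Prod.mk d ⁻¹' T) := rfl
  simp_rw [Measure.prod_apply hT, Measure.prod_apply (measurableSet_fiberSquare hT), hslice,
    Measure.prod_prod, ← sq]
  exact sq_lintegral_le_lintegral_sq m (measurable_measure_prodMk_left hT).aemeasurable

section Rearrange

variable {α β γ : Type*} [MeasurableSpace α] [MeasurableSpace β] [MeasurableSpace γ]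
  (μ : Measure α) (ν : Measure β) (ρ : Measure γ) [SFinite μ] [SFinite ν] [SFinite ρ]

lemma measurePreserving_middle_to_right :
    MeasurePreserving (fun q : α × β × γ => ((q.1, q.2.2), q.2.1))
      (μ.prod (ν.prod ρ)) ((μ.prod ρ).prod ν) :=
  (measurePreserving_prodAssoc μ ρ ν).symm.comp
    ((MeasurePreserving.id μ).prod (Measure.measurePreserving_swap (μ := ν) (ν := ρ)))

lemma measurePreserving_middle_pair_to_right :
    MeasurePreserving (fun p : α × β × β × γ => ((p.1, p.2.2.2), p.2.1, p.2.2.1))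
      (μ.prod (ν.prod (ν.prod ρ))) ((μ.prod ρ).prod (ν.prod ν)) :=
  (measurePreserving_prodAssoc μ ρ (ν.prod ν)).symm.comp <|
    ((MeasurePreserving.id μ).prod (Measure.measurePreserving_swap (μ := ν.prod ν) (ν := ρ))).comp
      ((MeasurePreserving.id μ).prod (measurePreserving_prodAssoc ν ν ρ).symm)

end Rearrange

lemma sq_measure_le_measure_resample_middle {α β γ : Type*} [MeasurableSpace α]
    [MeasurableSpace β] [MeasurableSpace γ] (μ : Measure α) (ν : Measure β) (ρ : Measure γ)
    [IsProbabilityMeasure μ] [SFinite ν] [IsProbabilityMeasure ρ]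
    {S : Set (α × β × γ)} (hS : MeasurableSet S) :
    μ.prod (ν.prod ρ) S ^ 2 ≤
      μ.prod (ν.prod (ν.prod ρ)) {p | (p.1, p.2.1, p.2.2.2) ∈ S ∧ (p.1, p.2.2.1, p.2.2.2) ∈ S} := by
  set T : Set ((α × γ) × β) := {q | (q.1.1, q.2, q.1.2) ∈ S}
  have hT : MeasurableSet T :=
    hS.preimage (measurable_fst.fst.prodMk (measurable_snd.prodMk measurable_fst.snd))
  calc μ.prod (ν.prod ρ) S ^ 2 = (μ.prod ρ).prod ν T ^ 2 :=
        congrArg (· ^ 2)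
          ((measurePreserving_middle_to_right μ ν ρ).measure_preimage hT.nullMeasurableSet)
    _ ≤ (μ.prod ρ).prod (ν.prod ν) (fiberSquare T) :=
        sq_measure_prod_le_measure_fiberSquare _ ν hT
    _ = _ := ((measurePreserving_middle_pair_to_right μ ν ρ).measure_preimage
          (measurableSet_fiberSquare hT).nullMeasurableSet).symm

/-- For independent samples X₁,Y₁,Y₂,Z₁ (with X₁ ~ μ, Y₁,Y₂ ~ ν, Z₁ ~ ρ),
an event `A` determined by (X,Y) and `A'` determined by (Y,Z), the probability that
A holds on (X₁,Y₁), A' holds on (Y₂,Z₁), and (A fails on (X₁,Y₂) or A' fails on (Y₁,Z₁))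
is at most P(A)·P(A') − P(A ∩ A')². -/
theorem stmt0 {α β γ : Type*} [MeasurableSpace α] [MeasurableSpace β] [MeasurableSpace γ]
    (μ : Measure α) (ν : Measure β) (ρ : Measure γ)
    [IsProbabilityMeasure μ] [IsProbabilityMeasure ν] [IsProbabilityMeasure ρ]
    (A : Set (α × β)) (A' : Set (β × γ))
    (hA : MeasurableSet A) (hA' : MeasurableSet A') :
    ((μ.prod (ν.prod (ν.prod ρ)))
      {p : α × β × β × γ |
        ((p.1, p.2.1) ∈ A ∧ (p.2.2.1, p.2.2.2) ∈ A') ∧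
        ((p.1, p.2.2.1) ∉ A ∨ (p.2.1, p.2.2.2) ∉ A')}).toReal ≤
    ((μ.prod ν) A).toReal * ((ν.prod ρ) A').toReal -
      (((μ.prod (ν.prod ρ))
        {q : α × β × γ | (q.1, q.2.1) ∈ A ∧ (q.2.1, q.2.2) ∈ A'}).toReal) ^ 2 := by
  set S : Set (α × β × γ) := {q | (q.1, q.2.1) ∈ A ∧ (q.2.1, q.2.2) ∈ A'}
  set E : Set (α × β × β × γ) := {p | (p.1, p.2.1) ∈ A ∧ (p.2.2.1, p.2.2.2) ∈ A'}
  set C : Set (α × β × β × γ) := {p | (p.1, p.2.1, p.2.2.2) ∈ S ∧ (p.1, p.2.2.1, p.2.2.2) ∈ S}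
  have hS : MeasurableSet S :=
    (hA.preimage (measurable_fst.prodMk measurable_snd.fst)).inter (hA'.preimage measurable_snd)
  have hC : MeasurableSet C :=
    (hS.preimage (measurable_fst.prodMk (measurable_snd.fst.prodMk measurable_snd.snd.snd))).inter
      (hS.preimage (measurable_fst.prodMk measurable_snd.snd))
  have hCE : C ⊆ E := fun p hp => ⟨hp.1.1, hp.2.2⟩
  have hE : μ.prod (ν.prod (ν.prod ρ)) E = μ.prod ν A * ν.prod ρ A' := by
    rw [← Measure.prod_prod]
    exact (measurePreserving_prodAssoc μ ν (ν.prod ρ)).symm.measure_preimage_equiv (A ×ˢ A')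
  have hdiff : {p : α × β × β × γ | ((p.1, p.2.1) ∈ A ∧ (p.2.2.1, p.2.2.2) ∈ A') ∧
      ((p.1, p.2.2.1) ∉ A ∨ (p.2.1, p.2.2.2) ∉ A')} = E \ C := by
    ext p
    simp only [S, E, C, Set.mem_ofPred_eq, Set.mem_sdiff]
    tauto
  have hresample := ENNReal.toReal_mono (measure_ne_top _ _)
    (sq_measure_le_measure_resample_middle μ ν ρ hS)
  rw [hdiff, measure_sdiff hCE hC.nullMeasurableSet (measure_ne_top _ _),
    ENNReal.toReal_sub_of_le (measure_mono hCE) (measure_ne_top _ _), hE, ENNReal.toReal_mul]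
  rw [ENNReal.toReal_pow] at hresample
  linarith
end

section
/- Define p_i' = p_i − δ²/(8·p_{i'}) and p_i⁻ = p_i − δ²/17, and symmetrically p_{i'}' = p_{i'} − δ²/(8·p_i) and p_{i'}⁻ = p_{i'} − δ²/17, where 0 < δ ≤ min(p_i, p_{i'}) ≤ 1 and p_i, p_{i'} ∈ (0,1]. Then p_i⁻ + p_{i'}⁻ · (p_i⁻ − p_i') ≥ p_i. -/
/-- Fact 2.10: with p_i' = p_i − δ²/(8 p_{i'}) and p_i⁻ = p_i − δ²/17 (and
symmetrically for i'), where 0 < δ ≤ min(p_i, p_{i'}) and p_i, p_{i'} ∈ (0,1], we have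
p_i⁻ + p_{i'}⁻ · (p_i⁻ − p_i') ≥ p_i. -/
theorem stmt1 (p q δ : ℝ) (hp0 : 0 < p) (hp1 : p ≤ 1) (hq0 : 0 < q) (hq1 : q ≤ 1)
    (hδ0 : 0 < δ) (hδp : δ ≤ p) (hδq : δ ≤ q) :
    p ≤ (p - δ ^ 2 / 17) + (q - δ ^ 2 / 17) * ((p - δ ^ 2 / 17) - (p - δ ^ 2 / (8 * q))) := by
  have h : δ ^ 2 ≤ q ^ 2 := by nlinarith
  have e : (p - δ ^ 2 / 17) - (p - δ ^ 2 / (8 * q))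
      = (δ ^ 2 * (17 - 8 * q)) / (136 * q) := by
    field_simp
    ring
  rw [e]
  have h2 : δ ^ 2 / 17 ≤ (q - δ ^ 2 / 17) * ((δ ^ 2 * (17 - 8 * q)) / (136 * q)) := by
    rw [show (q - δ ^ 2 / 17) * ((δ ^ 2 * (17 - 8 * q)) / (136 * q)) = ((q - δ ^ 2 / 17) * (δ ^ 2 * (17 - 8 * q))) / (136 * q) from (mul_div_assoc _ _ _).symm,
        div_le_div_iff₀ (by norm_num) (by positivity)]
    nlinarith [mul_nonneg (sq_nonneg δ) (mul_nonneg hq0.le (sub_nonneg.2 hq1)),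
        mul_le_mul_of_nonneg_left h (sq_nonneg δ),
        mul_nonneg (mul_nonneg (sq_nonneg δ) (sq_nonneg δ)) hq0.le]
  linarith
end

section
/- Let D be a finite DAG in which every pair of nodes u, v satisfying a symmetric relation R on their labels is joined by an arc, and let M be a matching on labels. Then there exists a set P of pairwise node-disjoint M-reversible arcs of D such that for every label i appearing in M, the number of nodes with label i that are endpoints of arcs in P is at least half the number of nodes with label i that are endpoints of some M-reversible arc in D. -/
open scoped Classical

/-- The directed graph obtained from `E` by reversing the direction of the arc `u → v`. -/
def reversedArc {V : Type*} (E : V → V → Prop) (u v : V) : V → V → Prop :=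
  fun a b => (E a b ∧ ¬(a = u ∧ b = v)) ∨ (a = v ∧ b = u)

/-- A directed graph is acyclic if there is no nontrivial directed cycle. -/
def Acyclic {V : Type*} (E : V → V → Prop) : Prop :=
  ∀ w, ¬ Relation.TransGen E w w

/-- An arc `(u,v)` of the DAG `E` is `M`-reversible: it is an arc, reversing it keeps the
graph acyclic, and the pair of labels of its endpoints belongs to the matching `M`. -/
def MReversible {V : Type*} {m : ℕ} (E : V → V → Prop) (L : V → Fin m)
    (M : Finset (Fin m × Fin m)) (a : V × V) : Prop :=
  E a.1 a.2 ∧ Acyclic (reversedArc E a.1 a.2) ∧ (L a.1, L a.2) ∈ M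

/-- If `u → w → v` is a path avoiding `u` and `v` in the middle, then reversing the
arc `(u, v)` creates a cycle `v → u → w → v`. -/
lemma cycle3 {V : Type*} {E : V → V → Prop} {u v w : V}
    (h1 : E u w) (h2 : E w v) (hwu : w ≠ u) (hwv : w ≠ v) :
    ¬ Acyclic (reversedArc E u v) := by
  intro hac
  exact hac v (Relation.TransGen.head (Or.inr ⟨rfl, rfl⟩)
    (Relation.TransGen.head (Or.inl ⟨h1, fun h => hwv h.2⟩)
      (Relation.TransGen.single (Or.inl ⟨h2, fun h => hwu h.1⟩))))

/-- Proposition 3.3: in a witness DAG there is a set `P` of pairwise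
node-disjoint `M`-reversible arcs such that for every label `i` appearing in the matching
`M`, the number of nodes with label `i` participating in some `M`-reversible arc is at most
twice the number of nodes with label `i` that are endpoints of arcs of `P`. -/
theorem stmt4 {V : Type*} [Fintype V] {m : ℕ} (G : SimpleGraph (Fin m))
    (E : V → V → Prop) (L : V → Fin m)
    (hacyc : Acyclic E)
    (hwdag : ∀ x y, x ≠ y → ((E x y ∨ E y x) ↔ (L x = L y ∨ G.Adj (L x) (L y))))
    (M : Finset (Fin m × Fin m))
    (hM_edge : ∀ e ∈ M, G.Adj e.1 e.2)
    (hM_match : ∀ e ∈ M, ∀ f ∈ M, e ≠ f →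
      e.1 ≠ f.1 ∧ e.1 ≠ f.2 ∧ e.2 ≠ f.1 ∧ e.2 ≠ f.2) :
    ∃ P : Set (V × V),
      (∀ a ∈ P, MReversible E L M a) ∧
      (∀ a ∈ P, ∀ b ∈ P, a ≠ b →
        a.1 ≠ b.1 ∧ a.1 ≠ b.2 ∧ a.2 ≠ b.1 ∧ a.2 ≠ b.2) ∧
      (∀ i : Fin m, (∃ j, (i, j) ∈ M ∨ (j, i) ∈ M) →
        Set.ncard {x : V | L x = i ∧
            ∃ y, MReversible E L M (y, x) ∨ MReversible E L M (x, y)} ≤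
          2 * Set.ncard {x : V | L x = i ∧ ∃ a ∈ P, x = a.1 ∨ x = a.2}) := by
  classical
  -- basic facts about the matching
  have hMne : ∀ e ∈ M, e.1 ≠ e.2 := fun e he => (hM_edge e he).ne
  have match1 : ∀ i j1 j2 : Fin m, (i, j1) ∈ M → (i, j2) ∈ M → j1 = j2 := by
    intro i j1 j2 h1 h2
    by_contra h
    exact (hM_match _ h1 _ h2 (by simp [Prod.ext_iff, h])).1 rfl
  have match2 : ∀ i j1 j2 : Fin m, (j1, i) ∈ M → (j2, i) ∈ M → j1 = j2 := by
    intro i j1 j2 h1 h2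
    by_contra h
    exact (hM_match _ h1 _ h2 (by simp [Prod.ext_iff, h])).2.2.2 rfl
  have match3 : ∀ i j1 j2 : Fin m, (i, j1) ∈ M → (j2, i) ∈ M → False := by
    intro i j1 j2 h1 h2
    by_cases h : ((i, j1) : Fin m × Fin m) = (j2, i)
    · rw [Prod.ext_iff] at h
      exact hMne _ h1 h.2.symm
    · exact (hM_match _ h1 _ h2 h).2.1 rfl
  -- facts about reversible arcs
  have hlabne : ∀ a : V × V, MReversible E L M a → L a.1 ≠ L a.2 :=
    fun a ha => hMne _ ha.2.2
  have harcne : ∀ a : V × V, MReversible E L M a → a.1 ≠ a.2 :=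
    fun a ha h => hlabne a ha (congrArg L h)
  have uniq_in : ∀ u u' v : V, MReversible E L M (u, v) → MReversible E L M (u', v) →
      L u = L u' → u = u' := by
    intro u u' v h1 h2 hL
    by_contra hne'
    rcases (hwdag u u' hne').mpr (Or.inl hL) with he | he
    · exact cycle3 he h2.1 (Ne.symm hne') (harcne _ h2) h1.2.1
    · exact cycle3 he h1.1 hne' (harcne _ h1) h2.2.1
  have uniq_out : ∀ u v v' : V, MReversible E L M (u, v) → MReversible E L M (u, v') →
      L v = L v' → v = v' := by
    intro u v v' h1 h2 hL
    by_contra hne'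
    rcases (hwdag v v' hne').mpr (Or.inl hL) with he | he
    · exact cycle3 h1.1 he (harcne _ h1).symm hne' h2.2.1
    · exact cycle3 h2.1 he (harcne _ h2).symm (Ne.symm hne') h1.2.1
  have uniq' : ∀ x1 x2 y : V, L x1 = L x2 →
      (MReversible E L M (x1, y) ∨ MReversible E L M (y, x1)) →
      (MReversible E L M (x2, y) ∨ MReversible E L M (y, x2)) → x1 = x2 := by
    intro x1 x2 y hL h1 h2
    rcases h1 with h1 | h1 <;> rcases h2 with h2 | h2
    · exact uniq_in x1 x2 y h1 h2 hL
    · exact (match3 (L x1) (L y) (L y) h1.2.2 (by rw [hL]; exact h2.2.2)).elim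
    · exact (match3 (L x2) (L y) (L y) h2.2.2 (by rw [← hL]; exact h1.2.2)).elim
    · exact uniq_out y x1 x2 h1 h2 hL
  -- a maximum-cardinality packing of disjoint reversible arcs
  set Pk : Finset (V × V) → Prop := fun Q =>
    (∀ a ∈ Q, MReversible E L M a) ∧
    ∀ a ∈ Q, ∀ b ∈ Q, a ≠ b → a.1 ≠ b.1 ∧ a.1 ≠ b.2 ∧ a.2 ≠ b.1 ∧ a.2 ≠ b.2 with hPkdef
  have hPk0 : Pk ∅ :=
    ⟨fun a ha => absurd ha (Finset.notMem_empty a),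
     fun a ha => absurd ha (Finset.notMem_empty a)⟩
  obtain ⟨P, hPmem, hPmax⟩ := Finset.exists_max_image
      (Finset.univ.filter Pk) Finset.card
      ⟨∅, Finset.mem_filter.mpr ⟨Finset.mem_univ _, hPk0⟩⟩
  rw [Finset.mem_filter] at hPmem
  have hP : Pk P := hPmem.2
  have hmax : ∀ Q, Pk Q → Q.card ≤ P.card :=
    fun Q hQ => hPmax Q (Finset.mem_filter.mpr ⟨Finset.mem_univ _, hQ⟩)
  -- maximality: every reversible arc meets P
  have hadd : ∀ a : V × V, MReversible E L M a →
      ∃ b ∈ P, a.1 = b.1 ∨ a.1 = b.2 ∨ a.2 = b.1 ∨ a.2 = b.2 := by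
    intro a ha
    by_contra hcon
    push_neg at hcon
    have haP : a ∉ P := by
      intro hm
      exact (hcon a hm).1 rfl
    have hins : Pk (insert a P) := by
      constructor
      · intro b hb
        rcases Finset.mem_insert.mp hb with rfl | hb
        · exact ha
        · exact hP.1 b hb
      · intro b hb c hc hbc
        rcases Finset.mem_insert.mp hb with hb' | hb'
        · rcases Finset.mem_insert.mp hc with hc' | hc'
          · exact absurd (hb'.trans hc'.symm) hbc
          · subst hb'
            exact hcon c hc'
        · rcases Finset.mem_insert.mp hc with hc' | hc'
          · subst hc'
            obtain ⟨u1, u2, u3, u4⟩ := hcon b hb'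
            exact ⟨u1.symm, u3.symm, u2.symm, u4.symm⟩
          · exact hP.2 b hb' c hc' hbc
    have := hmax _ hins
    rw [Finset.card_insert_of_notMem haP] at this
    omega
  refine ⟨(↑P : Set (V × V)), fun a ha => hP.1 a ha, fun a ha b hb => hP.2 a ha b hb, ?_⟩
  intro i _hj
  set Cov : Set V := {x : V | L x = i ∧ ∃ a ∈ (↑P : Set (V × V)), x = a.1 ∨ x = a.2}
    with hCovdef
  set Vi : Set V := {x : V | L x = i ∧
      ∃ y, MReversible E L M (y, x) ∨ MReversible E L M (x, y)} with hVidef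
  show Vi.ncard ≤ 2 * Cov.ncard
  -- every uncovered participating node has a "partner" arc in P
  have key : ∀ x : V, ∃ x' y : V, x ∈ Vi \ Cov →
      (∃ b ∈ P, (b.1 = x' ∧ b.2 = y) ∨ (b.1 = y ∧ b.2 = x')) ∧ L x' = i ∧ L y ≠ i ∧
        (MReversible E L M (x, y) ∨ MReversible E L M (y, x)) := by
    intro x
    by_cases hx : x ∈ Vi \ Cov
    swap
    · exact ⟨x, x, fun h => absurd h hx⟩
    obtain ⟨⟨hLx, y0, hy0⟩, hxCov⟩ := hx
    have hxnc : ¬ (∃ b ∈ P, x = b.1 ∨ x = b.2) := by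
      intro ⟨b, hbP, hb⟩
      exact hxCov ⟨hLx, b, hbP, hb⟩
    rcases hy0 with h | h
    · -- arc (y0, x), so (L y0, i) ∈ M
      have hM1 : (L y0, i) ∈ M := by have := h.2.2; rwa [hLx] at this
      obtain ⟨b, hbP, hb⟩ := hadd (y0, x) h
      have hbrev := hP.1 b hbP
      rcases hb with hb | hb | hb | hb
      · -- y0 = b.1 : other endpoint b.2 has label i
        have hb' : y0 = b.1 := hb
        have hb2 : L b.2 = i :=
          match1 (L y0) (L b.2) i (by rw [hb']; exact hbrev.2.2) hM1
        exact ⟨b.2, y0, fun _ => ⟨⟨b, hbP, Or.inr ⟨hb'.symm, rfl⟩⟩, hb2,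
          hMne _ hM1, Or.inr h⟩⟩
      · -- y0 = b.2 : impossible by matching
        have hb' : y0 = b.2 := hb
        exact (match3 (L y0) i (L b.1) hM1 (by rw [hb']; exact hbrev.2.2)).elim
      · exact absurd ⟨b, hbP, Or.inl hb⟩ hxnc
      · exact absurd ⟨b, hbP, Or.inr hb⟩ hxnc
    · -- arc (x, y0), so (i, L y0) ∈ M
      have hM1 : (i, L y0) ∈ M := by have := h.2.2; rwa [hLx] at this
      obtain ⟨b, hbP, hb⟩ := hadd (x, y0) h
      have hbrev := hP.1 b hbP
      rcases hb with hb | hb | hb | hb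
      · exact absurd ⟨b, hbP, Or.inl hb⟩ hxnc
      · exact absurd ⟨b, hbP, Or.inr hb⟩ hxnc
      · -- y0 = b.1 : impossible by matching
        have hb' : y0 = b.1 := hb
        exact (match3 (L y0) (L b.2) i (by rw [hb']; exact hbrev.2.2) hM1).elim
      · -- y0 = b.2 : other endpoint b.1 has label i
        have hb' : y0 = b.2 := hb
        have hb1 : L b.1 = i :=
          match2 (L y0) (L b.1) i (by rw [hb']; exact hbrev.2.2) hM1
        exact ⟨b.1, y0, fun _ => ⟨⟨b, hbP, Or.inl ⟨rfl, hb'.symm⟩⟩, hb1,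
          (hMne _ hM1).symm, Or.inl h⟩⟩
  choose f g hfg using key
  have hinj : (Vi \ Cov).ncard ≤ Cov.ncard := by
    apply Set.ncard_le_ncard_of_injOn f
    · intro x hx
      obtain ⟨⟨b, hbP, hsh⟩, hLf, _, _⟩ := hfg x hx
      rcases hsh with ⟨h1, _⟩ | ⟨_, h2⟩
      · exact ⟨hLf, b, hbP, Or.inl h1.symm⟩
      · exact ⟨hLf, b, hbP, Or.inr h2.symm⟩
    · intro x1 hx1 x2 hx2 heq
      obtain ⟨⟨b1, hb1P, hsh1⟩, hLf1, hLg1, harc1⟩ := hfg x1 hx1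
      obtain ⟨⟨b2, hb2P, hsh2⟩, hLf2, hLg2, harc2⟩ := hfg x2 hx2
      have hbb : b1 = b2 := by
        by_contra hne'
        have hd := hP.2 b1 hb1P b2 hb2P hne'
        rcases hsh1 with ⟨k1, k2⟩ | ⟨k1, k2⟩ <;> rcases hsh2 with ⟨l1, l2⟩ | ⟨l1, l2⟩
        · exact hd.1 (k1.trans (heq.trans l1.symm))
        · exact hd.2.1 (k1.trans (heq.trans l2.symm))
        · exact hd.2.2.1 (k2.trans (heq.trans l1.symm))
        · exact hd.2.2.2 (k2.trans (heq.trans l2.symm))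
      subst hbb
      have hyy : g x1 = g x2 := by
        rcases hsh1 with ⟨h1, h1'⟩ | ⟨h1, h1'⟩ <;> rcases hsh2 with ⟨h2, h2'⟩ | ⟨h2, h2'⟩
        · exact h1'.symm.trans h2'
        · -- f x1 = b1.1 = g x2 : label contradiction
          exact (hLg2 (by rw [← h2, h1, heq]; exact hLf2)).elim
        · -- g x1 = b1.1 = f x2 : label contradiction
          exact (hLg1 (by rw [← h1, h2]; exact hLf2)).elim
        · exact h1.symm.trans h2
      have hLL : L x1 = L x2 := hx1.1.1.trans hx2.1.1.symm
      exact uniq' x1 x2 (g x1) hLL harc1 (hyy ▸ harc2)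
  have hsplit := Set.ncard_inter_add_ncard_diff_eq_ncard Vi Cov (Set.toFinite _)
  have h1 : (Vi ∩ Cov).ncard ≤ Cov.ncard :=
    Set.ncard_le_ncard Set.inter_subset_right (Set.toFinite _)
  omega
end

section
/- Let G_B = ([m],[n],E_B) be a linear bipartite graph (any two left vertices share at most one common right neighbor), where each left vertex i represents an elementary event A_i = ⋀_{j ∈ N(i)} [X_j ∈ S_i^j] over independent random variables X_1,…,X_n each uniform on [0,1], with P(A_i) = p_i ∈ (0,1]. Let E_D be the set of pairs (i₀,i₁) of left vertices sharing a common right neighbor. Then Σ_{(i₀,i₁) ∈ E_D} P(A_{i₀} ∩ A_{i₁}) ≥ (min_i p_i)² · ( Σ_{i∈[m]} |N(i)| · p_i^{1/|N(i)|} − n ). -/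
/-! For a right vertex `j`, the second Bonferroni inequality applied to the events
`X_j ∈ S_i^j` (over the left vertices `i ∋ j`) gives
`∑_i μ(S_i^j) ≤ 1 + ∑_{i < i'} μ(S_i^j ∩ S_{i'}^j)`. Summing over `j` and using AM–GM in the
form `|N(i)| p_i^{1/|N(i)|} ≤ ∑_{j ∈ N(i)} μ(S_i^j)` bounds `∑_i |N(i)| p_i^{1/|N(i)|} - n` by
the sum, over dependent pairs, of `μ(S_i^j ∩ S_{i'}^j)` for their unique common neighbour `j`. By
independence of the coordinates, `P(A_i ∩ A_{i'}) ≥ μ(S_i^j ∩ S_{i'}^j) p_i p_{i'}`, and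
`p_i p_{i'} ≥ (min p)²`. -/

open MeasureTheory Finset

theorem Finset.sum_filter_lt_insert_of_forall_lt {ι M : Type*} [LinearOrder ι]
    [AddCommMonoid M] (g : ι → ι → M) {a : ι} {s : Finset ι} (has : ∀ x ∈ s, x < a) :
    ∑ e ∈ (insert a s ×ˢ insert a s).filter (fun e => e.1 < e.2), g e.1 e.2 =
      ∑ e ∈ (s ×ˢ s).filter (fun e => e.1 < e.2), g e.1 e.2 + ∑ x ∈ s, g x a := by
  have ha : a ∉ s := fun h => lt_irrefl a (has a h)
  simp only [sum_filter, sum_product]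
  rw [sum_insert ha, sum_insert ha, sum_congr rfl fun x _ => sum_insert ha]
  simp +contextual [sum_add_distrib, has, (has _ _).not_gt, add_comm]

theorem MeasureTheory.sum_measureReal_le_measureReal_biUnion_add_sum_inter {α ι : Type*}
    [MeasurableSpace α] [LinearOrder ι] (μ : Measure α) [IsFiniteMeasure μ]
    (s : Finset ι) (f : ι → Set α) (hf : ∀ i, MeasurableSet (f i)) :
    ∑ i ∈ s, μ.real (f i) ≤ μ.real (⋃ i ∈ s, f i) +
      ∑ e ∈ (s ×ˢ s).filter (fun e => e.1 < e.2), μ.real (f e.1 ∩ f e.2) := by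
  induction s using Finset.induction_on_max with
  | empty => simp
  | insert a s has ih =>
    have ha : a ∉ s := fun h => lt_irrefl a (has a h)
    have hinter : μ.real ((⋃ i ∈ s, f i) ∩ f a) ≤ ∑ i ∈ s, μ.real (f i ∩ f a) := by
      rw [Set.iUnion₂_inter]
      exact measureReal_biUnion_finset_le s _
    have hsplit := measureReal_union_add_inter (μ := μ) (s := ⋃ i ∈ s, f i) (hf a)
      (measure_ne_top μ _)
    rw [sum_insert ha, sum_filter_lt_insert_of_forall_lt (fun x y => μ.real (f x ∩ f y)) has,
      set_biUnion_insert, Set.union_comm]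
    linarith

theorem Finset.sum_le_prod_of_card_le_one {ι R : Type*} [CommSemiring R] [Preorder R]
    [ZeroLEOneClass R] {s : Finset ι} (hs : #s ≤ 1) (f : ι → R) :
    ∑ i ∈ s, f i ≤ ∏ i ∈ s, f i := by
  rcases s.eq_empty_or_nonempty with rfl | ⟨a, ha⟩
  · simp
  · rw [eq_singleton_iff_unique_mem.2 ⟨ha, fun b hb => card_le_one.1 hs b hb a ha⟩]
    simp

theorem Real.card_mul_prod_rpow_le_sum {ι : Type*} (s : Finset ι) (z : ι → ℝ)
    (hz : ∀ i ∈ s, 0 ≤ z i) :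
    (#s : ℝ) * (∏ i ∈ s, z i) ^ ((1 : ℝ) / #s) ≤ ∑ i ∈ s, z i := by
  rcases s.eq_empty_or_nonempty with rfl | hs
  · simp
  have hcard : (0 : ℝ) < #s := by exact_mod_cast hs.card_pos
  have := Real.geom_mean_le_arith_mean s (fun _ => 1) z (fun _ _ => zero_le_one)
    (by simpa using hs) hz
  simp only [Real.rpow_one, sum_const, nsmul_eq_mul, mul_one, one_mul] at this
  rw [one_div, mul_comm]
  exact (le_div_iff₀ hcard).1 this

theorem MeasureTheory.Measure.prod_inter_mul_prod_mul_prod_le_real_pi {ι : Type*}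
    [Fintype ι] [DecidableEq ι] {α : ι → Type*} [∀ j, MeasurableSpace (α j)]
    (ν : ∀ j, Measure (α j)) [∀ j, IsProbabilityMeasure (ν j)] (A B : Finset ι)
    (U V : ∀ j, Set (α j)) :
    (∏ j ∈ A ∩ B, (ν j).real (U j ∩ V j)) * (∏ j ∈ A, (ν j).real (U j)) *
        ∏ j ∈ B, (ν j).real (V j) ≤
      (Measure.pi ν).real {x | (∀ j ∈ A, x j ∈ U j) ∧ ∀ j ∈ B, x j ∈ V j} := by
  set U' : ∀ j, Set (α j) := fun j => if j ∈ A then U j else Set.univ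
  set V' : ∀ j, Set (α j) := fun j => if j ∈ B then V j else Set.univ
  have hbox : {x : ∀ j, α j | (∀ j ∈ A, x j ∈ U j) ∧ ∀ j ∈ B, x j ∈ V j} =
      Set.univ.pi fun j => U' j ∩ V' j := by
    ext x
    simp [U', V', Set.mem_ite_univ_right, forall_and]
  have hfactor : (∏ j ∈ A ∩ B, (ν j).real (U j ∩ V j)) * (∏ j ∈ A, (ν j).real (U j)) *
        ∏ j ∈ B, (ν j).real (V j) =
      ∏ j, (if j ∈ A ∩ B then (ν j).real (U j ∩ V j) else 1) *
        (if j ∈ A then (ν j).real (U j) else 1) *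
          (if j ∈ B then (ν j).real (V j) else 1) := by
    simp only [prod_mul_distrib, prod_ite_mem, univ_inter]
  rw [hbox, measureReal_def, Measure.pi_pi, ENNReal.toReal_prod, hfactor]
  refine prod_le_prod (fun j _ => by positivity) fun j _ => ?_
  by_cases hA : j ∈ A <;> by_cases hB : j ∈ B <;> simp [U', V', hA, hB, ← measureReal_def]
  exact mul_le_of_le_one_right (mul_nonneg measureReal_nonneg measureReal_nonneg)
    measureReal_le_one |>.trans (mul_le_of_le_one_right measureReal_nonneg measureReal_le_one)

theorem MeasureTheory.sq_mul_sum_inter_le_real_pi {ι κ α : Type*} [Fintype κ] [DecidableEq κ]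
    [MeasurableSpace α] (μ : Measure α) [IsProbabilityMeasure μ] (N : ι → Finset κ)
    (S : ι → κ → Set α) {c : ℝ} (hc : 0 ≤ c)
    (hcp : ∀ i, c ≤ ∏ j ∈ N i, μ.real (S i j))
    {i i' : ι} (hii' : #(N i ∩ N i') ≤ 1) :
    c ^ 2 * ∑ j ∈ N i ∩ N i', μ.real (S i j ∩ S i' j) ≤
      (Measure.pi fun _ => μ).real
        {x | (∀ j ∈ N i, x j ∈ S i j) ∧ ∀ j ∈ N i', x j ∈ S i' j} := by
  have hsum_le := sum_le_prod_of_card_le_one hii' fun j => μ.real (S i j ∩ S i' j)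
  calc c ^ 2 * ∑ j ∈ N i ∩ N i', μ.real (S i j ∩ S i' j)
      ≤ (∏ j ∈ N i ∩ N i', μ.real (S i j ∩ S i' j)) * (∏ j ∈ N i, μ.real (S i j)) *
          ∏ j ∈ N i', μ.real (S i' j) := by
        rw [sq, mul_comm, ← mul_assoc]
        gcongr
        exacts [hcp i, hcp i']
    _ ≤ _ := Measure.prod_inter_mul_prod_mul_prod_le_real_pi _ _ _ _ _

def dependencyEdges {ι κ : Type*} [Fintype ι] [LinearOrder ι] [DecidableEq κ]
    (N : ι → Finset κ) : Finset (ι × ι) :=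
  univ.filter fun e => e.1 < e.2 ∧ (N e.1 ∩ N e.2).Nonempty

theorem MeasureTheory.sum_sum_measureReal_le_card_add_sum_dependencyEdges {α ι κ : Type*}
    [MeasurableSpace α] [Fintype ι] [LinearOrder ι] [Fintype κ] [DecidableEq κ]
    (μ : Measure α) [IsProbabilityMeasure μ] (N : ι → Finset κ) (S : ι → κ → Set α)
    (hS : ∀ i j, MeasurableSet (S i j)) :
    ∑ i, ∑ j ∈ N i, μ.real (S i j) ≤ Fintype.card κ +
      ∑ e ∈ dependencyEdges N, ∑ j ∈ N e.1 ∩ N e.2, μ.real (S e.1 j ∩ S e.2 j) := by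
  set F : κ → ι → Set α := fun j i => if j ∈ N i then S i j else ∅
  have hF : ∀ j i, MeasurableSet (F j i) := by
    intro j i; simp only [F]; split_ifs; exacts [hS i j, .empty]
  have hFsingle : ∀ j i, μ.real (F j i) = if j ∈ N i then μ.real (S i j) else 0 := by
    intro j i; simp only [F]; split_ifs <;> simp
  have hFpair : ∀ j (e : ι × ι), μ.real (F j e.1 ∩ F j e.2) =
      if j ∈ N e.1 ∩ N e.2 then μ.real (S e.1 j ∩ S e.2 j) else 0 := by
    intro j e; simp only [F, mem_inter]; split_ifs <;> simp_all
  have hbonf : ∀ j, ∑ i, μ.real (F j i) ≤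
      1 + ∑ e ∈ univ.filter (fun e : ι × ι => e.1 < e.2), μ.real (F j e.1 ∩ F j e.2) := by
    intro j
    have := sum_measureReal_le_measureReal_biUnion_add_sum_inter μ univ (F j) (hF j)
    rw [univ_product_univ] at this
    linarith [measureReal_le_one (μ := μ) (s := ⋃ i ∈ univ, F j i)]
  have hedges : ∑ e ∈ univ.filter (fun e : ι × ι => e.1 < e.2),
        ∑ j ∈ N e.1 ∩ N e.2, μ.real (S e.1 j ∩ S e.2 j) =
      ∑ e ∈ dependencyEdges N, ∑ j ∈ N e.1 ∩ N e.2, μ.real (S e.1 j ∩ S e.2 j) := by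
    rw [dependencyEdges, ← filter_filter]
    exact (sum_filter_of_ne fun e _ h => nonempty_of_sum_ne_zero h).symm
  calc ∑ i, ∑ j ∈ N i, μ.real (S i j) = ∑ j, ∑ i, μ.real (F j i) := by
        rw [sum_comm]; simp only [hFsingle, sum_ite_mem, univ_inter]
    _ ≤ ∑ j : κ, (1 + ∑ e ∈ univ.filter (fun e : ι × ι => e.1 < e.2),
          μ.real (F j e.1 ∩ F j e.2)) := sum_le_sum fun j _ => hbonf j
    _ = Fintype.card κ + ∑ e ∈ dependencyEdges N,
          ∑ j ∈ N e.1 ∩ N e.2, μ.real (S e.1 j ∩ S e.2 j) := by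
        rw [sum_add_distrib, sum_comm, ← hedges]
        simp only [hFpair, sum_ite_mem, univ_inter, sum_const, card_univ, nsmul_one]

theorem stmt5_general (m n : ℕ) (hm : 0 < m)
    (N : Fin m → Finset (Fin n))
    (hlin : ∀ i i' : Fin m, i ≠ i' → (N i ∩ N i').card ≤ 1)
    (S : Fin m → Fin n → Set ℝ)
    (hSmeas : ∀ i j, MeasurableSet (S i j))
    (hSsub : ∀ i j, S i j ⊆ Set.Icc 0 1)
    (p : Fin m → ℝ)
    (hp : ∀ i, p i = ∏ j ∈ N i, (volume (S i j)).toReal) :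
    (Finset.univ.inf' ⟨⟨0, hm⟩, Finset.mem_univ _⟩ p) ^ 2 *
      ((∑ i, ((N i).card : ℝ) * p i ^ ((1 : ℝ) / (N i).card)) - n) ≤
    ∑ e ∈ Finset.univ.filter
        (fun e : Fin m × Fin m => e.1 < e.2 ∧ (N e.1 ∩ N e.2).Nonempty),
      ((Measure.pi fun _ : Fin n => volume.restrict (Set.Icc (0:ℝ) 1))
        {x : Fin n → ℝ |
          (∀ j ∈ N e.1, x j ∈ S e.1 j) ∧ (∀ j ∈ N e.2, x j ∈ S e.2 j)}).toReal := by
  set ν : Measure ℝ := volume.restrict (Set.Icc 0 1)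
  have : IsProbabilityMeasure ν := ⟨by simp [ν]⟩
  set pmin := univ.inf' ⟨⟨0, hm⟩, mem_univ _⟩ p
  have hpν : ∀ i, p i = ∏ j ∈ N i, ν.real (S i j) := fun i => by
    rw [hp i]
    refine prod_congr rfl fun j _ => ?_
    rw [measureReal_def, Measure.restrict_apply (hSmeas i j), Set.inter_eq_left.2 (hSsub i j)]
  have hpmin_nonneg : 0 ≤ pmin :=
    le_inf' _ _ fun i _ => hpν i ▸ prod_nonneg fun _ _ => measureReal_nonneg
  have hpmin_le : ∀ i, pmin ≤ p i := fun i => inf'_le p (mem_univ i)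
  have hamgm : ∑ i, ((N i).card : ℝ) * p i ^ ((1 : ℝ) / (N i).card) ≤
      ∑ i, ∑ j ∈ N i, ν.real (S i j) := sum_le_sum fun i _ => by
    rw [hpν i]; exact Real.card_mul_prod_rpow_le_sum _ _ fun _ _ => measureReal_nonneg
  have hbonf := sum_sum_measureReal_le_card_add_sum_dependencyEdges ν N S hSmeas
  rw [Fintype.card_fin] at hbonf
  have hpair : ∀ e ∈ dependencyEdges N,
      pmin ^ 2 * ∑ j ∈ N e.1 ∩ N e.2, ν.real (S e.1 j ∩ S e.2 j) ≤
        (Measure.pi fun _ => ν).real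
          {x | (∀ j ∈ N e.1, x j ∈ S e.1 j) ∧ ∀ j ∈ N e.2, x j ∈ S e.2 j} := fun e he =>
      sq_mul_sum_inter_le_real_pi ν N S hpmin_nonneg (fun i => hpν i ▸ hpmin_le i)
        (hlin _ _ (mem_filter.1 he).2.1.ne)
  calc pmin ^ 2 * ((∑ i, ((N i).card : ℝ) * p i ^ ((1 : ℝ) / (N i).card)) - n)
      ≤ pmin ^ 2 * ∑ e ∈ dependencyEdges N,
          ∑ j ∈ N e.1 ∩ N e.2, ν.real (S e.1 j ∩ S e.2 j) := by
        gcongr; linarith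
    _ ≤ _ := by
        rw [mul_sum]
        exact sum_le_sum hpair

/-- Lemma 4.3: for a linear bipartite graph with elementary events
A_i = ⋀_{j∈N(i)} [X_j ∈ S_i^j] over independent uniform variables on [0,1], the total
intersection probability over dependent pairs is at least
(min p)² · (Σ_i |N(i)|·p_i^{1/|N(i)|} − n). -/
theorem stmt5 (m n : ℕ) (hm : 0 < m)
    (N : Fin m → Finset (Fin n)) (hN : ∀ i, (N i).Nonempty)
    (hlin : ∀ i i' : Fin m, i ≠ i' → (N i ∩ N i').card ≤ 1)
    (S : Fin m → Fin n → Set ℝ)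
    (hSmeas : ∀ i j, MeasurableSet (S i j))
    (hSsub : ∀ i j, S i j ⊆ Set.Icc 0 1)
    (p : Fin m → ℝ)
    (hp : ∀ i, p i = ∏ j ∈ N i, (volume (S i j)).toReal)
    (hp0 : ∀ i, 0 < p i) (hp1 : ∀ i, p i ≤ 1) :
    (Finset.univ.inf' ⟨⟨0, hm⟩, Finset.mem_univ _⟩ p) ^ 2 *
      ((∑ i, ((N i).card : ℝ) * p i ^ ((1 : ℝ) / (N i).card)) - n) ≤
    ∑ e ∈ Finset.univ.filter
        (fun e : Fin m × Fin m => e.1 < e.2 ∧ (N e.1 ∩ N e.2).Nonempty),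
      ((Measure.pi fun _ : Fin n => volume.restrict (Set.Icc (0:ℝ) 1))
        {x : Fin n → ℝ |
          (∀ j ∈ N e.1, x j ∈ S e.1 j) ∧ (∀ j ∈ N e.2, x j ∈ S e.2 j)}).toReal :=
  stmt5_general m n hm N hlin S hSmeas hSsub p hp
end

section
/- Let G_D = ([m], E_D) be a graph, M ⊆ E_D a matching, and G^M the homomorphic graph obtained by splitting each matched vertex i into two adjacent vertices i↑, i↓ (with each of i↑, i↓ adjacent to all vertices, split or not, that arose from neighbors of i in G_D). Assign weights p^M by p^M_{i↑} = p'_i, p^M_{i↓} = p⁻_i − p'_i for matched i, and p^M_i = p⁻_i for unmatched i, where p'_i ≤ p⁻_i. Then the sum over all single-sink witness DAGs D' of G^M of Π_{v' ∈ D'} p^M_{L'(v')} equals the sum over all single-sink witness DAGs D of G_D of Π_{v ∈ D} p⁻_{L(v)}. -/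
open scoped Classical ENNReal

/-- A (labelled) proper witness DAG of a graph `G`: a finite DAG on `Fin n` with node
labels in the vertices of `G`, such that two distinct nodes are joined by an arc (in some
direction) iff their labels are equal or adjacent in `G`, and with a unique sink. -/
structure PWdag {α : Type} (G : SimpleGraph α) where
  n : ℕ
  arc : Fin n → Fin n → Prop
  lab : Fin n → α
  acyclic : ∀ v, ¬ Relation.TransGen arc v v
  cond : ∀ v v', v ≠ v' → ((arc v v' ∨ arc v' v) ↔ (lab v = lab v' ∨ G.Adj (lab v) (lab v')))
  single_sink : ∃! v, ∀ u, ¬ arc v u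

/-- The weight Π_{v ∈ D} p(L(v)) of a witness DAG. -/
noncomputable def PWdag.weight {α : Type} {G : SimpleGraph α} (p : α → ℝ≥0∞)
    (D : PWdag G) : ℝ≥0∞ :=
  ∏ v : Fin D.n, p (D.lab v)

/-- A vertex is matched by the matching `M`. -/
def Matched {m : ℕ} (M : Finset (Fin m × Fin m)) (i : Fin m) : Prop :=
  ∃ j, (i, j) ∈ M ∨ (j, i) ∈ M

/-- The base vertex in `Fin m` of a vertex of the split graph: `Sum.inl i` stands for
`i` (or `i↑` if `i` is matched) and `Sum.inr i` stands for `i↓` (for matched `i`). -/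
def base {m : ℕ} : Fin m ⊕ Fin m → Fin m := Sum.elim id id

/-- The homomorphic graph `G^M`: each matched vertex `i` is split into two adjacent copies
`i↑ = Sum.inl i` and `i↓ = Sum.inr i`, and copies of (equal or) adjacent base vertices are
adjacent.  (Vertices `Sum.inr i` for unmatched `i` are isolated and carry weight `0`.) -/
def splitGraph {m : ℕ} (G : SimpleGraph (Fin m)) (M : Finset (Fin m × Fin m)) :
    SimpleGraph (Fin m ⊕ Fin m) :=
  SimpleGraph.fromRel (fun x y =>
    (Matched M (base x) ∨ ∃ i, x = Sum.inl i) ∧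
    (Matched M (base y) ∨ ∃ i, y = Sum.inl i) ∧
    (G.Adj (base x) (base y) ∨ base x = base y))

/-- The weights on `G^M`: `p^M_{i↑} = p'_i`, `p^M_{i↓} = p⁻_i − p'_i` for matched `i`,
and `p^M_i = p⁻_i` for unmatched `i`. -/
noncomputable def pM {m : ℕ} (M : Finset (Fin m × Fin m)) (p' pminus : Fin m → ℝ≥0∞) :
    Fin m ⊕ Fin m → ℝ≥0∞ :=
  Sum.elim (fun i => if Matched M i then p' i else pminus i)
           (fun i => if Matched M i then pminus i - p' i else 0)

/-!
Away from the junk vertices `Sum.inr i` (which have weight `0`), two vertices of `G^M` are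
equal or adjacent iff their base vertices are. Hence relabelling by base vertices turns a
witness DAG of `G^M` into one of `G_D` on the same nodes, and it is recovered from that DAG
together with the choice, at each node, of a copy of its label: `↑` or `↓` if the label is
matched, the unique copy otherwise. Weights are products over the nodes, so summing over the
choices replaces each factor by the fiber sum `p'_i + (p⁻_i - p'_i) = p⁻_i`.
-/

namespace PWdag

variable {α β : Type} {G : SimpleGraph α} {H : SimpleGraph β}

def relabel (D : PWdag G) (f : Fin D.n → β)
    (hf : ∀ v v', (f v = f v' ∨ H.Adj (f v) (f v')) ↔
      (D.lab v = D.lab v' ∨ G.Adj (D.lab v) (D.lab v'))) : PWdag H where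
  n := D.n
  arc := D.arc
  lab := f
  acyclic := D.acyclic
  cond v v' hne := (D.cond v v' hne).trans (hf v v').symm
  single_sink := D.single_sink

lemma relabel_eq_self (D : PWdag G) {f : Fin D.n → α} {hf} (hfD : ∀ v, f v = D.lab v) :
    D.relabel f hf = D := by
  obtain rfl : f = D.lab := funext hfD
  rfl

lemma weight_eq_zero_of_lab_notMem {p : α → ℝ≥0∞} {S : Set α} (hp : ∀ x ∉ S, p x = 0)
    {D : PWdag G} (hD : ¬ ∀ v, D.lab v ∈ S) : D.weight p = 0 := by
  push Not at hD
  obtain ⟨v, hv⟩ := hD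
  exact Finset.prod_eq_zero (Finset.mem_univ v) (hp _ hv)

section Lift

variable (π : β → α) (S : Set β)

/-- For `G^M` and `π = base`, a lift of a matched label `i` is the choice of `i↑` or `i↓`. -/
def liftEquiv
    (hS : ∀ x ∈ S, ∀ y ∈ S, (x = y ∨ H.Adj x y) ↔
      (π x = π y ∨ G.Adj (π x) (π y))) :
    {D' : PWdag H // ∀ v, D'.lab v ∈ S} ≃
      Σ D : PWdag G, ∀ v : Fin D.n, {x // x ∈ S ∧ π x = D.lab v} where
  toFun D' :=
    ⟨D'.1.relabel (fun v => π (D'.1.lab v)) fun v v' => (hS _ (D'.2 v) _ (D'.2 v')).symm,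
      fun v => ⟨D'.1.lab v, D'.2 v, rfl⟩⟩
  invFun Dσ :=
    ⟨Dσ.1.relabel (fun v => (Dσ.2 v).1) fun v v' => by
        rw [hS _ (Dσ.2 v).2.1 _ (Dσ.2 v').2.1, (Dσ.2 v).2.2, (Dσ.2 v').2.2],
      fun v => (Dσ.2 v).2.1⟩
  left_inv _ := rfl
  right_inv := by
    rintro ⟨D, σ⟩
    have hlab : ∀ v, π (σ v).1 = D.lab v := fun v => (σ v).2.2
    have hD : (D.relabel (fun v => π (σ v).1) fun v v' => by rw [hlab, hlab]) = D :=
      relabel_eq_self D hlab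
    refine Sigma.ext hD (Function.hfunext rfl fun v v' hvv' => ?_)
    cases hvv'
    refine (Subtype.heq_iff_coe_eq fun x => ?_).mpr rfl
    exact and_congr_right' (iff_of_eq (congrArg (π x = ·) (hlab v)))

theorem tsum_weight_eq_of_tsum_fiber [Fintype β]
    (hS : ∀ x ∈ S, ∀ y ∈ S, (x = y ∨ H.Adj x y) ↔ (π x = π y ∨ G.Adj (π x) (π y)))
    (p : β → ℝ≥0∞) (q : α → ℝ≥0∞)
    (hp : ∀ x ∉ S, p x = 0) (hpq : ∀ a, ∑' x : {x // x ∈ S ∧ π x = a}, p x = q a) :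
    ∑' D' : PWdag H, D'.weight p = ∑' D : PWdag G, D.weight q :=
  calc ∑' D' : PWdag H, D'.weight p
      = ∑' D' : {D' : PWdag H // ∀ v, D'.lab v ∈ S}, D'.1.weight p :=
        (tsum_subtype_eq_of_support_subset (s := {D' : PWdag H | ∀ v, D'.lab v ∈ S})
          fun _ hD' => not_not.mp fun h => hD' (weight_eq_zero_of_lab_notMem hp h)).symm
    _ = ∑' Dσ : Σ D : PWdag G, ∀ v : Fin D.n, {x // x ∈ S ∧ π x = D.lab v},
          ∏ v, p (Dσ.2 v) :=
        ((liftEquiv π S hS).symm.tsum_eq _).symm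
    _ = ∑' D : PWdag G, ∏ v, ∑' x : {x // x ∈ S ∧ π x = D.lab v}, p x := by
        simp_rw [ENNReal.tsum_sigma', tsum_fintype, Fintype.prod_sum]
    _ = ∑' D : PWdag G, D.weight q := by
        simp_rw [hpq]
        rfl

end Lift

end PWdag

def IsSplitVertex {m : ℕ} (M : Finset (Fin m × Fin m)) (x : Fin m ⊕ Fin m) : Prop :=
  Matched M (base x) ∨ ∃ i, x = Sum.inl i

section SplitGraph

variable {m : ℕ} (G : SimpleGraph (Fin m)) (M : Finset (Fin m × Fin m))

lemma splitGraph_eq_or_adj_iff {x y : Fin m ⊕ Fin m} (hx : IsSplitVertex M x)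
    (hy : IsSplitVertex M y) :
    (x = y ∨ (splitGraph G M).Adj x y) ↔ (base x = base y ∨ G.Adj (base x) (base y)) := by
  rw [splitGraph, SimpleGraph.fromRel_adj]
  constructor
  · rintro (rfl | ⟨-, ⟨-, -, h | h⟩ | ⟨-, -, h | h⟩⟩)
    exacts [Or.inl rfl, Or.inr h, Or.inl h, Or.inr h.symm, Or.inl h.symm]
  · rintro (h | h)
    · by_cases hxy : x = y
      · exact Or.inl hxy
      · exact Or.inr ⟨hxy, Or.inl ⟨hx, hy, Or.inr h⟩⟩
    · exact Or.inr ⟨fun hxy => G.irrefl (hxy ▸ h), Or.inl ⟨hx, hy, Or.inl h⟩⟩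

lemma pM_eq_zero_of_not_isSplitVertex (p' pminus : Fin m → ℝ≥0∞) {x : Fin m ⊕ Fin m}
    (hx : ¬ IsSplitVertex M x) : pM M p' pminus x = 0 := by
  rcases x with i | i
  · exact absurd (Or.inr ⟨i, rfl⟩) hx
  · have : ¬ Matched M i := fun h => hx (Or.inl h)
    simp [pM, this]

lemma tsum_pM_fiber {p' pminus : Fin m → ℝ≥0∞} (hle : ∀ i, p' i ≤ pminus i)
    (i : Fin m) :
    ∑' x : {x // IsSplitVertex M x ∧ base x = i}, pM M p' pminus x = pminus i := by
  refine (tsum_subtype {x | IsSplitVertex M x ∧ base x = i} _).trans ?_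
  rw [tsum_fintype, Fintype.sum_sum_type]
  by_cases hi : Matched M i
  · simp [Set.indicator, IsSplitVertex, base, pM, hi, and_comm (b := _ = i), ite_and,
      add_tsub_cancel_of_le (hle i)]
  · simp [Set.indicator, IsSplitVertex, base, pM, hi, and_comm (b := _ = i), ite_and]

end SplitGraph

theorem stmt9_general {m : ℕ} (G : SimpleGraph (Fin m)) (M : Finset (Fin m × Fin m))
    (p' pminus : Fin m → ℝ≥0∞) (hle : ∀ i, p' i ≤ pminus i) :
    ∑' D' : PWdag (splitGraph G M), D'.weight (pM M p' pminus) =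
      ∑' D : PWdag G, D.weight pminus :=
  PWdag.tsum_weight_eq_of_tsum_fiber base {x | IsSplitVertex M x}
    (fun _ hx _ hy => splitGraph_eq_or_adj_iff G M hx hy) _ _
    (fun _ hx => pM_eq_zero_of_not_isSplitVertex M p' pminus hx) (tsum_pM_fiber M hle)

/-- Proposition 3.9: the sum of weights of single-sink witness DAGs of the
split graph `G^M` with weights `p^M` equals the sum of weights of single-sink witness DAGs
of `G_D` with weights `p⁻` (in the extended nonnegative reals). -/
theorem stmt9 {m : ℕ} (G : SimpleGraph (Fin m)) (M : Finset (Fin m × Fin m))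
    (hM_edge : ∀ e ∈ M, G.Adj e.1 e.2)
    (hM_match : ∀ e ∈ M, ∀ f ∈ M, e ≠ f →
      e.1 ≠ f.1 ∧ e.1 ≠ f.2 ∧ e.2 ≠ f.1 ∧ e.2 ≠ f.2)
    (p' pminus : Fin m → ℝ≥0∞) (hle : ∀ i, p' i ≤ pminus i) :
    ∑' D' : PWdag (splitGraph G M), D'.weight (pM M p' pminus) =
      ∑' D : PWdag G, D.weight pminus :=
  stmt9_general G M p' pminus hle
end

section
/- Let G_D = ([m], E_D) be a graph and let q_I(G_D, p) = Σ_{J ∈ Ind(G_D), I ⊆ J} (−1)^{|J|−|I|} Π_{i∈J} p_i for independent sets I, where Ind(G_D) is the set of independent sets of G_D. If A_1,…,A_m are events with dependency graph G_D, probabilities p_i, such that A_i ∩ A_j = ∅ for every edge (i,j) ∈ E_D (extremal instance), then q_∅(G_D, p) = 1 − P(⋃_{i∈[m]} A_i). -/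
/-!
Both sides, restricted to the events indexed by a finite set `S`, satisfy the same recurrence
when an index `i` is added to `S`. On the polynomial side this is the fundamental recurrence of
the independence polynomial, `Z(S ∪ {i}) = Z(S) + x_i Z(T)` with `T` the non-neighbours of `i`
in `S`. On the probability side, `P(avoid S ∪ {i}) = P(avoid S) - P(A_i ∩ avoid S)`; mutual
exclusivity lets one replace `avoid S` by `avoid T` in the last term, and the dependency graph
condition factors it as `p_i P(avoid T)`. Strong induction on `S` closes the argument.
-/

open MeasureTheory Finset
open scoped Classical

namespace SimpleGraph

variable {ι R : Type*} [CommRing R] (G : SimpleGraph ι)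

/-- The multivariate independence polynomial of `G` restricted to `S`; the paper's `q_∅(G, p)` is
`G.indepPoly (-p) univ`. -/
noncomputable def indepPoly (x : ι → R) (S : Finset ι) : R :=
  ∑ J ∈ S.powerset with G.IsIndepSet ((J : Finset ι) : Set ι), ∏ i ∈ J, x i

variable {G}

theorem isIndepSet_insert_of_notMem {i : ι} {J : Set ι} (hi : i ∉ J) :
    G.IsIndepSet (insert i J) ↔ G.IsIndepSet J ∧ ∀ j ∈ J, ¬ G.Adj i j := by
  simp only [IsIndepSet, Set.pairwise_insert_of_notMem hi, G.adj_comm _ i, and_self]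

variable (G)

theorem indepPoly_empty (x : ι → R) : G.indepPoly x ∅ = 1 := by
  simp [indepPoly, filter_singleton]

theorem indepPoly_insert (x : ι → R) {i : ι} {S : Finset ι} (hi : i ∉ S) :
    G.indepPoly x (insert i S) = G.indepPoly x S + x i * G.indepPoly x {j ∈ S | ¬ G.Adj i j} := by
  set T := {j ∈ S | ¬ G.Adj i j}
  have hTS : T ⊆ S := filter_subset _ _
  have h_insert : ∀ J ⊆ S,
      G.IsIndepSet ((insert i J : Finset ι) : Set ι) ↔ G.IsIndepSet (J : Set ι) ∧ J ⊆ T :=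
    fun J hJ => by
      rw [coe_insert, isIndepSet_insert_of_notMem (fun h => hi (hJ h))]
      exact and_congr_right fun _ =>
        ⟨fun h j hj => mem_filter.2 ⟨hJ hj, h j hj⟩, fun h j hj => (mem_filter.1 (h hj)).2⟩
  rw [indepPoly, indepPoly, indepPoly, sum_filter, sum_filter, sum_filter, sum_powerset_insert hi,
    mul_sum]
  congr 1
  rw [← sum_subset (powerset_mono.2 hTS)]
  · refine sum_congr rfl fun J hJ => ?_
    have hJT := mem_powerset.1 hJ
    have hiJ : i ∉ J := fun h => hi (hTS (hJT h))
    simp only [h_insert J (hJT.trans hTS), hJT, and_true, prod_insert hiJ, mul_ite, mul_zero]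
  · intro J hJS hJT
    exact if_neg fun h => hJT (mem_powerset.2 ((h_insert J (mem_powerset.1 hJS)).1 h).2)

variable {G}

theorem inter_biInter_compl_filter_not_adj {Ω : Type*} {A : ι → Set Ω} {i : ι}
    (hext : ∀ j, G.Adj i j → A i ∩ A j = ∅) (S : Finset ι) :
    A i ∩ ⋂ j ∈ {j ∈ S | ¬ G.Adj i j}, (A j)ᶜ = A i ∩ ⋂ j ∈ S, (A j)ᶜ := by
  ext ω
  simp only [Set.mem_inter_iff, Set.mem_iInter, Set.mem_compl_iff, mem_filter]
  refine and_congr_right fun hω => ⟨fun h j hj hωj => ?_, fun h j hj => h j hj.1⟩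
  by_cases hij : G.Adj i j
  · exact (hext j hij).subset ⟨hω, hωj⟩
  · exact h j ⟨hj, hij⟩ hωj

section Extremal

variable {Ω : Type*} [MeasurableSpace Ω] {μ : Measure Ω} {A : ι → Set Ω}

theorem measureReal_biInter_compl_insert [IsFiniteMeasure μ] {i : ι} (hA : MeasurableSet (A i))
    (hext : ∀ j, G.Adj i j → A i ∩ A j = ∅) (S : Finset ι)
    (hindep : μ (A i ∩ ⋂ j ∈ {j ∈ S | ¬ G.Adj i j}, (A j)ᶜ) =
      μ (A i) * μ (⋂ j ∈ {j ∈ S | ¬ G.Adj i j}, (A j)ᶜ)) :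
    μ.real (⋂ j ∈ insert i S, (A j)ᶜ) = μ.real (⋂ j ∈ S, (A j)ᶜ) -
      μ.real (A i) * μ.real (⋂ j ∈ {j ∈ S | ¬ G.Adj i j}, (A j)ᶜ) := by
  set Y := ⋂ j ∈ S, (A j)ᶜ
  have h_split : μ.real (Y ∩ A i) + μ.real (Y \ A i) = μ.real Y := measureReal_inter_add_sdiff hA
  have h_hit : μ.real (Y ∩ A i) =
      μ.real (A i) * μ.real (⋂ j ∈ {j ∈ S | ¬ G.Adj i j}, (A j)ᶜ) := by
    rw [Set.inter_comm, ← inter_biInter_compl_filter_not_adj hext, measureReal_def, hindep,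
      ENNReal.toReal_mul, measureReal_def, measureReal_def]
  rw [set_biInter_insert, ← Set.sdiff_eq_compl_inter, ← h_hit]
  linarith

theorem indepPoly_neg_measureReal_eq_measureReal_biInter_compl [IsProbabilityMeasure μ]
    (hA : ∀ i, MeasurableSet (A i))
    (hdep : ∀ i (S : Finset ι), (∀ j ∈ S, j ≠ i ∧ ¬ G.Adj i j) →
      μ (A i ∩ ⋂ j ∈ S, (A j)ᶜ) = μ (A i) * μ (⋂ j ∈ S, (A j)ᶜ))
    (hext : ∀ i j, G.Adj i j → A i ∩ A j = ∅) (S : Finset ι) :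
    G.indepPoly (fun i => -μ.real (A i)) S = μ.real (⋂ j ∈ S, (A j)ᶜ) := by
  induction S using Finset.strongInduction with
  | H S ih =>
    rcases S.eq_empty_or_nonempty with rfl | ⟨i, hi⟩
    · simp [indepPoly_empty]
    set T := {j ∈ S.erase i | ¬ G.Adj i j}
    have hT : T ⊂ S := (filter_subset _ _).trans_ssubset (erase_ssubset hi)
    have hindep := hdep i T fun j hj => ⟨ne_of_mem_erase (mem_filter.1 hj).1, (mem_filter.1 hj).2⟩
    rw [← insert_erase hi, indepPoly_insert _ _ (notMem_erase i S),
      measureReal_biInter_compl_insert (hA i) (hext i) _ hindep, ih _ (erase_ssubset hi), ih T hT]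
    ring

end Extremal

end SimpleGraph

open SimpleGraph in
/-- Lemma 5.3: if `G` is a dependency graph of the events A_1,…,A_m and the
instance is extremal (adjacent events are mutually exclusive), then
q_∅(G,p) = Σ_{J independent} (−1)^{|J|} Π_{i∈J} p_i equals 1 − P(⋃ A_i). -/
theorem stmt13 {Ω : Type*} [MeasurableSpace Ω] (μ : Measure Ω) [IsProbabilityMeasure μ]
    (m : ℕ) (G : SimpleGraph (Fin m)) (A : Fin m → Set Ω)
    (hAmeas : ∀ i, MeasurableSet (A i))
    (hdep : ∀ i : Fin m, ∀ S : Finset (Fin m),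
      (∀ j ∈ S, j ≠ i ∧ ¬ G.Adj i j) →
      μ (A i ∩ ⋂ j ∈ S, (A j)ᶜ) = μ (A i) * μ (⋂ j ∈ S, (A j)ᶜ))
    (hext : ∀ i j, G.Adj i j → A i ∩ A j = ∅) :
    ∑ J ∈ Finset.univ.filter
        (fun J : Finset (Fin m) => ∀ a ∈ J, ∀ b ∈ J, a ≠ b → ¬ G.Adj a b),
      (-1 : ℝ) ^ J.card * ∏ i ∈ J, (μ (A i)).toReal
      = 1 - (μ (⋃ i, A i)).toReal := by
  have h := indepPoly_neg_measureReal_eq_measureReal_biInter_compl hAmeas hdep hext univ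
  have h_univ : ⋂ j ∈ (univ : Finset (Fin m)), (A j)ᶜ = (⋃ i, A i)ᶜ := by simp
  rw [indepPoly, powerset_univ, h_univ, measureReal_compl (MeasurableSet.iUnion hAmeas),
    probReal_univ] at h
  simp only [prod_neg] at h
  simp only [← measureReal_def]
  convert h using 2
  ext J
  simp only [mem_filter]
  rfl
end
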